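/- arXiv:2605.16729 — 5 statements merged into one kernel-verified Lean document; each statement's English description precedes it below -/
import Mathlib

section
/- Let a ∈ F_q, set R_a(x) := R(x) + a x, and let N := |{(x,y) ∈ F_q × F_q : y^p − y = x·R_a(x)}|. Let d := dim_{F_p} V_q. Then: (1) if there exists u ∈ V_q with Tr_{F_q/F_p}(u·R_a(u)) ≠ 0, then N = q; (2) if Tr_{F_q/F_p}(u·R_a(u)) = 0 for all u ∈ V_q, then (N − q)² = (p−1)²·q·p^d, i.e. N = q ± (p−1)√(q·p^d). -/
open Finset

open scoped Classical

noncomputable section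

/-- Length-two Witt vectors, with the operations specialised to characteristic two. -/
def W2 (R : Type*) := R × R

namespace W2

variable {R : Type*} [CommRing R]

instance : Zero (W2 R) := ⟨((0, 0) : R × R)⟩

instance : Add (W2 R) := ⟨fun x y => ((x.1 + y.1, x.2 + y.2 + x.1 * y.1) : R × R)⟩

instance [CharP R 2] : Neg (W2 R) := ⟨fun x => ((x.1, x.2 + x.1 * x.1) : R × R)⟩

theorem fst_add (x y : W2 R) : (x + y).1 = x.1 + y.1 := rfl
theorem snd_add (x y : W2 R) : (x + y).2 = x.2 + y.2 + x.1 * y.1 := rfl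
theorem fst_zero : (0 : W2 R).1 = 0 := rfl
theorem snd_zero : (0 : W2 R).2 = 0 := rfl
theorem fst_neg [CharP R 2] (x : W2 R) : (-x).1 = x.1 := rfl
theorem snd_neg [CharP R 2] (x : W2 R) : (-x).2 = x.2 + x.1 * x.1 := rfl

instance [CharP R 2] : AddCommGroup (W2 R) where
  add := (· + ·)
  zero := 0
  neg := Neg.neg
  add_assoc a b c := Prod.ext_iff.mpr (by
    constructor <;> simp only [fst_add, snd_add] <;> ring)
  zero_add a := Prod.ext_iff.mpr (by
    constructor <;> simp [fst_add, snd_add, fst_zero, snd_zero])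
  add_zero a := Prod.ext_iff.mpr (by
    constructor <;> simp [fst_add, snd_add, fst_zero, snd_zero])
  add_comm a b := Prod.ext_iff.mpr (by
    constructor <;> simp only [fst_add, snd_add] <;> ring)
  neg_add_cancel a := Prod.ext_iff.mpr (by
    constructor
    · simp only [fst_add, fst_neg, fst_zero]
      exact CharTwo.add_self_eq_zero a.1
    · simp only [snd_add, snd_neg, snd_zero, fst_neg]
      rw [show a.2 + a.1 * a.1 + a.2 + a.1 * a.1
            = (a.2 + a.2) + (a.1 * a.1 + a.1 * a.1) by ring]
      rw [CharTwo.add_self_eq_zero, CharTwo.add_self_eq_zero, add_zero])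
  nsmul := nsmulRec
  zsmul := zsmulRec

/-- Frobenius on length-two Witt vectors (characteristic two). -/
def frob (x : W2 R) : W2 R := ((x.1 ^ 2, x.2 ^ 2) : R × R)

/-- The Witt-vector trace `Tr_{q/2} = ∑_{i=0}^{n-1} Frobⁱ`. -/
def tr [CharP R 2] (n : ℕ) (x : W2 R) : W2 R := ∑ i ∈ Finset.range n, frob^[i] x

/-- The additive character of `W₂(𝔽₂)` determined by `ξ₂(1,0) = I`
(for `I` a fixed primitive fourth root of unity), evaluated on Witt vectors
whose components lie in the prime field `𝔽₂ = {0,1}`. -/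
def xi (I : ℂ) (x : W2 R) : ℂ := (if x.1 = 0 then 1 else I) * (if x.2 = 0 then 1 else -1)

end W2

variable {K : Type*}

/-- The absolute trace `Tr_{q/2} : 𝔽_q → 𝔽₂`, computed inside `K` (here `q = 2^n`). -/
def tr2 [Field K] (n : ℕ) (x : K) : K := ∑ i ∈ Finset.range n, x ^ 2 ^ i

/-- The relative trace `Tr_{q/p} : 𝔽_q → 𝔽_p ⊆ 𝔽_q`, computed inside `K`
(here `q = p^m`). -/
def trp [Field K] (p m : ℕ) (x : K) : K := ∑ i ∈ Finset.range m, x ^ p ^ i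

/-- The character `ψ_q(x) = (-1)^{Tr_{q/2}(x)}`. -/
def psiq [Field K] (n : ℕ) (x : K) : ℂ := if tr2 n x = 0 then 1 else -1

/-- The map `Q_q(x) = ξ₂(Tr_{q/2}(x,0))` on Witt vectors of length two. -/
def Qq [Field K] [CharP K 2] (I : ℂ) (n : ℕ) (x : K) : ℂ :=
  W2.xi I (W2.tr n (((x, 0) : K × K) : W2 K))

/-- The unique `2^j`-th root in a perfect field of characteristic two. -/
def rt (L : Type*) [Field L] [ExpChar L 2] [PerfectRing L 2] (j : ℕ) (x : L) : L :=
  (fun y => (frobeniusEquiv L 2).symm y)^[j] x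

/-- Evaluation of the `𝔽_p`-linearised polynomial `∑_{i=0}^{e} c_i x^{p^i}`. -/
def Lpoly [Field K] (p e : ℕ) (c : ℕ → K) (x : K) : K :=
  ∑ i ∈ Finset.range (e + 1), c i * x ^ p ^ i

/-- The adjoint `f^*(x) = ∑_{i=0}^{e} (c_i x)^{p^{-i}}` (with `p = 2^k`). -/
def adj [Field K] [ExpChar K 2] [PerfectRing K 2] (k e : ℕ) (c : ℕ → K) (x : K) : K :=
  ∑ i ∈ Finset.range (e + 1), rt K (k * i) (c i * x)

/-- Evaluation of the `𝔽_p`-linearised polynomial `∑_{i=1}^{e} c_i x^{p^i}`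
(no constant-in-`x` coefficient). -/
def LpolyIcc [Field K] (p e : ℕ) (c : ℕ → K) (x : K) : K :=
  ∑ i ∈ Finset.Icc 1 e, c i * x ^ p ^ i

/-- The adjoint `R^*(x) = ∑_{i=1}^{e} (c_i x)^{p^{-i}}` (with `p = 2^k`). -/
def adjIcc [Field K] [ExpChar K 2] [PerfectRing K 2] (k e : ℕ) (c : ℕ → K) (x : K) : K :=
  ∑ i ∈ Finset.Icc 1 e, rt K (k * i) (c i * x)

/-- The coefficients `a_i = ∑_{j=0}^{e-i} (b_j b_{j+i})^{p^{-j}}` of `R_F` (with `p = 2^k`). -/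
def aRF [Field K] [ExpChar K 2] [PerfectRing K 2] (k e : ℕ) (b : ℕ → K) (i : ℕ) : K :=
  ∑ j ∈ Finset.range (e - i + 1), rt K (k * j) (b j * b (j + i))

/-- The linearised polynomial `R_F(x) = ∑_{i=1}^{e} a_i x^{p^i}` (with `p = 2^k`). -/
def RF [Field K] [ExpChar K 2] [PerfectRing K 2] (k e : ℕ) (b : ℕ → K) (x : K) : K :=
  ∑ i ∈ Finset.Icc 1 e, aRF k e b i * x ^ (2 ^ k) ^ i

/-- `γ_F = ∑_{0 ≤ i < j ≤ e} b_i^{p^{-i}} b_j^{p^{-j}}` (with `p = 2^k`). -/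
def gammaF [Field K] [ExpChar K 2] [PerfectRing K 2] (k e : ℕ) (b : ℕ → K) : K :=
  ∑ i ∈ Finset.range (e + 1), ∑ j ∈ Finset.Ioo i (e + 1), rt K (k * i) (b i) * rt K (k * j) (b j)

/-- `α_F(t) = γ_F + F^*(t)²`. -/
def alphaF [Field K] [ExpChar K 2] [PerfectRing K 2] (k e : ℕ) (b : ℕ → K) (t : K) : K :=
  gammaF k e b + adj k e b t ^ 2

/-- `R_{F,t}(x) = R_F(x) + α_F(t) x`. -/
def RFt [Field K] [ExpChar K 2] [PerfectRing K 2] (k e : ℕ) (b : ℕ → K) (t x : K) : K :=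
  RF k e b x + alphaF k e b t * x

/-- The number of affine points of the van der Geer–van der Vlugt curve
`y^p - y = x R(x)` with coordinates in `K`. -/
def Ncount (K : Type*) [Field K] (p : ℕ) (R : K → K) : ℕ :=
  Nat.card {z : K × K // z.2 ^ p - z.2 = z.1 * R z.1}

/-- The adjoint `F^*` of `F(x) = ∑_{i=0}^{e} b_i x^{p^i}`, with coefficients `b_i ∈ K`,
viewed as a function on the algebraic closure `𝔽` of `K`. -/
def adjBar [Field K] [CharP K 2] (k e : ℕ) (b : ℕ → K) (x : AlgebraicClosure K) : AlgebraicClosure K :=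
  adj k e (fun i => algebraMap K (AlgebraicClosure K) (b i)) x

/-- `F(x) = ∑_{i=0}^{e} b_i x^{p^i}`, with coefficients `b_i ∈ K`, viewed as a function on
the algebraic closure `𝔽` of `K` (with `p = 2^k`). -/
def LpolyBar [Field K] [CharP K 2] (k e : ℕ) (b : ℕ → K) (x : AlgebraicClosure K) : AlgebraicClosure K :=
  Lpoly (2 ^ k) e (fun i => algebraMap K (AlgebraicClosure K) (b i)) x

/-!
Write `Q x = x R_a(x)`, `ψ = (-1) ^ Tr_{q/2}` and `S = ∑ₓ ψ(Q x)`. The map `y ↦ y ^ p + y`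
is `p`-to-one onto the kernel of `Tr_{q/p}`, so `N = p · #{x | Tr_{q/p}(Q x) = 0}`; writing
this indicator as `p⁻¹ ∑_{λ ∈ 𝔽_p} ψ(λ Q x)` and using that every `λ ≠ 0` in `𝔽_p` is a
square `μ²` with `Q(μ x) = μ² Q x` gives `N = q + (p - 1) S`.
By adjointness, `Tr_{q/2}(Q (x + y) - Q x - Q y) = Tr_{q/2}(x E(y))`, hence
`S² = q ∑_{v ∈ V_q} ψ(Q v)`. If `Tr_{q/p}(Q u) ≠ 0` for some `u ∈ V_q`, some `𝔽_p`-multiple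
`v` of `u` has `ψ(Q v) = -1`, and translating by `v` gives `S = -S`. Otherwise `ψ(Q v) = 1`
on `V_q` and `S² = q p^d`.
-/

open Polynomial

theorem pow_pow_eq_self_of_pow_eq {M : Type*} [Monoid M] {x : M} {b : ℕ} (h : x ^ b = x)
    (i : ℕ) : x ^ b ^ i = x := by
  induction i with
  | zero => rw [pow_zero, pow_one]
  | succ i ih => rw [pow_succ, pow_mul, ih, h]

section Root

variable {L : Type*} [Field L] [ExpChar L 2] [PerfectRing L 2]

theorem rt_pow (j : ℕ) (x : L) : rt L j x ^ 2 ^ j = x := by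
  induction j generalizing x with
  | zero => simp [rt]
  | succ j ih =>
    rw [rt, Function.iterate_succ_apply, ← rt, pow_succ, pow_mul, ih, frobeniusEquiv_symm_pow_p]

theorem rt_eq_iterateFrobeniusEquiv_symm (j : ℕ) (x : L) :
    rt L j x = (iterateFrobeniusEquiv L 2 j).symm x :=
  (iterateFrobeniusEquiv L 2 j).injective <| by
    rw [RingEquiv.apply_symm_apply, iterateFrobeniusEquiv_def, rt_pow]

theorem rt_mul (j : ℕ) (x y : L) : rt L j (x * y) = rt L j x * rt L j y := by
  simp only [rt_eq_iterateFrobeniusEquiv_symm, map_mul]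

theorem rt_eq_self {j : ℕ} {x : L} (hx : x ^ 2 ^ j = x) : rt L j x = x := by
  rw [rt_eq_iterateFrobeniusEquiv_symm, RingEquiv.symm_apply_eq, iterateFrobeniusEquiv_def, hx]

end Root

section Field

variable [Field K]

theorem tr2_eq_trp (n : ℕ) : (tr2 n : K → K) = trp (2 ^ 1) n := by
  funext x; simp [tr2, trp]

theorem trp_mul_of_pow_eq {p : ℕ} (m : ℕ) {μ : K} (hμ : μ ^ p = μ) (x : K) :
    trp p m (μ * x) = μ * trp p m x := by
  simp only [trp, mul_sum, mul_pow, pow_pow_eq_self_of_pow_eq hμ]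

theorem LpolyIcc_mul_of_pow_eq {p : ℕ} (e : ℕ) (c : ℕ → K) {μ : K} (hμ : μ ^ p = μ)
    (x : K) : LpolyIcc p e c (μ * x) = μ * LpolyIcc p e c x := by
  simp only [LpolyIcc, mul_sum, mul_pow, pow_pow_eq_self_of_pow_eq hμ, mul_left_comm]

theorem card_le_natDegree_of_forall_eval_eq_zero {P : K[X]} (hP : P ≠ 0) {S : Finset K}
    (hS : ∀ x ∈ S, P.eval x = 0) : #S ≤ P.natDegree :=
  not_lt.mp fun h => hP (eq_zero_of_natDegree_lt_card_of_eval_eq_zero' P S hS h)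

theorem card_le_of_forall_trp_eq_zero {b m : ℕ} (hb : 2 ≤ b) (hm : 1 ≤ m) {S : Finset K}
    (hS : ∀ x ∈ S, trp b m x = 0) : #S ≤ b ^ (m - 1) := by
  obtain ⟨n, rfl⟩ : ∃ n, m = n + 1 := ⟨m - 1, by omega⟩
  have htail : (∑ i ∈ range n, (X : K[X]) ^ b ^ i).degree < (b ^ n : ℕ) :=
    (degree_sum_le _ _).trans_lt <| (Finset.sup_lt_iff (WithBot.bot_lt_coe _)).2 fun i hi => by
      rw [degree_X_pow]; exact_mod_cast Nat.pow_lt_pow_right hb (mem_range.1 hi)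
  have hdeg : (X ^ b ^ n + ∑ i ∈ range n, (X : K[X]) ^ b ^ i).natDegree = b ^ n := by
    rw [natDegree_add_eq_left_of_degree_lt (by rwa [degree_X_pow]), natDegree_X_pow]
  refine (card_le_natDegree_of_forall_eval_eq_zero (monic_X_pow_add htail).ne_zero
    fun x hx => ?_).trans_eq hdeg
  simpa [trp, sum_range_succ, add_comm, eval_finsetSum] using hS x hx

theorem exists_tr2_ne_zero {n : ℕ} (hn : 1 ≤ n) {S : Finset K} (hS : 2 ^ (n - 1) < #S) :
    ∃ x ∈ S, tr2 n x ≠ 0 := by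
  by_contra! h
  exact (card_le_of_forall_trp_eq_zero le_rfl hn h).not_gt hS

theorem psiq_of_tr2_eq_zero {n : ℕ} {x : K} (h : tr2 n x = 0) : psiq n x = 1 := if_pos h

theorem psiq_of_tr2_ne_zero {n : ℕ} {x : K} (h : tr2 n x ≠ 0) : psiq n x = -1 := if_neg h

theorem psiq_zero {n : ℕ} : psiq n (0 : K) = 1 :=
  psiq_of_tr2_eq_zero (by simp [tr2])

theorem psiq_mul_self (n : ℕ) (x : K) : psiq n x * psiq n x = 1 := by
  unfold psiq; split_ifs <;> norm_num

variable [Fintype K]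

theorem card_filter_pow_two_pow_add_eq_le {k : ℕ} (hk : 1 ≤ k) (t : K) :
    #{y : K | y ^ 2 ^ k + y = t} ≤ 2 ^ k := by
  have hlt : (X - C t : K[X]).degree < (2 ^ k : ℕ) := by
    rw [degree_X_sub_C]; exact_mod_cast Nat.one_lt_two_pow (by omega)
  have hdeg : (X ^ 2 ^ k + (X - C t) : K[X]).natDegree = 2 ^ k := by
    rw [natDegree_add_eq_left_of_degree_lt (by rwa [degree_X_pow]), natDegree_X_pow]
  refine (card_le_natDegree_of_forall_eval_eq_zero (monic_X_pow_add hlt).ne_zero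
    fun y hy => ?_).trans_eq hdeg
  simpa [← add_sub_assoc, sub_eq_zero] using hy

theorem pow_eq_self_of_card_eq {q : ℕ} (hcard : Fintype.card K = q) (x : K) : x ^ q = x :=
  hcard ▸ FiniteField.pow_card x

/-- The subfield `𝔽_p` of `K`, for `p = 2 ^ k`. -/
def frobFixed (K : Type*) [Field K] [Fintype K] (k : ℕ) : Finset K := {x : K | x ^ 2 ^ k = x}

theorem mem_frobFixed {k : ℕ} {x : K} : x ∈ frobFixed K k ↔ x ^ 2 ^ k = x := by
  simp [frobFixed]

theorem zero_mem_frobFixed {k : ℕ} : (0 : K) ∈ frobFixed K k :=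
  mem_frobFixed.mpr (zero_pow (by positivity))

theorem exists_sq_eq_of_mem_frobFixed {k : ℕ} (hk : 1 ≤ k) {l : K} (hl : l ∈ frobFixed K k) :
    ∃ μ ∈ frobFixed K k, μ ^ 2 = l := by
  rw [mem_frobFixed] at hl
  refine ⟨l ^ 2 ^ (k - 1), mem_frobFixed.mpr ?_, ?_⟩
  · rw [← pow_mul, mul_comm, pow_mul, hl]
  · rw [← pow_mul, ← pow_succ, Nat.sub_add_cancel hk, hl]

def weilSum (n : ℕ) (Q : K → K) : ℂ := ∑ x, psiq n (Q x)

end Field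

section ExpChar

variable [Field K] {r : ℕ} [ExpChar K r] (k : ℕ)

theorem trp_add (m : ℕ) (x y : K) :
    trp (r ^ k) m (x + y) = trp (r ^ k) m x + trp (r ^ k) m y := by
  simp only [trp, ← sum_add_distrib, ← pow_mul, add_pow_expChar_pow]

theorem trp_pow_expChar_pow (m : ℕ) (x : K) :
    trp (r ^ k) m (x ^ r ^ k) = trp (r ^ k) m x ^ r ^ k := by
  simp only [trp, sum_pow_char_pow, ← pow_mul, mul_comm]

theorem trp_pow_expChar_pow_sub (m : ℕ) (x : K) :
    trp (r ^ k) m x ^ r ^ k - trp (r ^ k) m x = x ^ (r ^ k) ^ m - x := by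
  calc _ = ∑ i ∈ range m, (x ^ (r ^ k) ^ (i + 1) - x ^ (r ^ k) ^ i) := by
        rw [← trp_pow_expChar_pow, trp, trp, ← sum_sub_distrib]
        exact sum_congr rfl fun i _ => by rw [← pow_mul, pow_succ']
    _ = _ := by rw [sum_range_sub (fun i => x ^ (r ^ k) ^ i), pow_zero, pow_one]

theorem LpolyIcc_add (e : ℕ) (c : ℕ → K) (x y : K) :
    LpolyIcc (r ^ k) e c (x + y) = LpolyIcc (r ^ k) e c x + LpolyIcc (r ^ k) e c y := by
  simp only [LpolyIcc, ← sum_add_distrib, ← pow_mul, add_pow_expChar_pow, mul_add]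

end ExpChar

theorem adjIcc_mul_of_pow_eq [Field K] [ExpChar K 2] [PerfectRing K 2] (k e : ℕ) (c : ℕ → K)
    {μ : K} (hμ : μ ^ 2 ^ k = μ) (x : K) : adjIcc k e c (μ * x) = μ * adjIcc k e c x := by
  rw [adjIcc, adjIcc, mul_sum]
  refine sum_congr rfl fun i _ => ?_
  rw [mul_left_comm, rt_mul, rt_eq_self (by rw [pow_mul]; exact pow_pow_eq_self_of_pow_eq hμ i)]

section CharTwo

variable [Field K] [CharP K 2] {n : ℕ}

theorem tr2_add (x y : K) : tr2 n (x + y) = tr2 n x + tr2 n y := by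
  rw [tr2_eq_trp, trp_add]

theorem tr2_sum {ι : Type*} (s : Finset ι) (f : ι → K) :
    tr2 n (∑ i ∈ s, f i) = ∑ i ∈ s, tr2 n (f i) := by
  simp only [tr2, sum_pow_char_pow]
  exact sum_comm

theorem tr2_pow_two_pow (x : K) (j : ℕ) : tr2 n (x ^ 2 ^ j) = tr2 n x ^ 2 ^ j := by
  simp only [tr2, sum_pow_char_pow, ← pow_mul, mul_comm]

theorem tr2_sq_eq_self {x : K} (hx : x ^ 2 ^ n = x) : tr2 n x ^ 2 = tr2 n x := by
  have h := trp_pow_expChar_pow_sub (r := 2) 1 n x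
  rw [← tr2_eq_trp, ← pow_mul, one_mul, hx, sub_self, sub_eq_zero, pow_one] at h
  exact h

theorem tr2_eq_zero_or_one {x : K} (hx : x ^ 2 ^ n = x) : tr2 n x = 0 ∨ tr2 n x = 1 :=
  eq_zero_or_one_of_sq_eq_self (tr2_sq_eq_self hx)

theorem tr2_pow_two_pow_of_pow_eq {x : K} (hx : x ^ 2 ^ n = x) (j : ℕ) :
    tr2 n (x ^ 2 ^ j) = tr2 n x := by
  rw [tr2_pow_two_pow, pow_pow_eq_self_of_pow_eq (pow_two (tr2 n x) ▸ tr2_sq_eq_self hx)]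

theorem tr2_mul_eq_tr2_trp (k m : ℕ) (x : K) : tr2 (k * m) x = tr2 k (trp (2 ^ k) m x) := by
  simp only [tr2, trp, sum_pow_char_pow]
  rw [mul_comm k m, sum_range, ← finProdFinEquiv.sum_comp, Fintype.sum_prod_type, sum_range,
    sum_comm]
  simp only [sum_range, finProdFinEquiv_apply_val, ← pow_mul, pow_add]
  exact sum_congr rfl fun i _ => sum_congr rfl fun l _ => by rw [mul_comm]

theorem psiq_add {x y : K} (hx : x ^ 2 ^ n = x) (hy : y ^ 2 ^ n = y) :
    psiq n (x + y) = psiq n x * psiq n y := by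
  rcases tr2_eq_zero_or_one hx with h | h <;> rcases tr2_eq_zero_or_one hy with h' | h' <;>
    simp [psiq, tr2_add, h, h', CharTwo.add_self_eq_zero]

theorem sum_eq_zero_of_add_eq_neg {M : Type*} [AddCommGroup M] [IsAddTorsionFree M]
    {S : Finset K} {f : K → M} (v : K) (hS : ∀ s ∈ S, s + v ∈ S)
    (hf : ∀ s ∈ S, f (s + v) = -f s) : ∑ s ∈ S, f s = 0 := by
  have hinv (s : K) : s + v + v = s := by rw [add_assoc, CharTwo.add_self_eq_zero, add_zero]
  rw [← self_eq_neg, ← sum_neg_distrib]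
  exact sum_nbij' (· + v) (· + v) hS hS (fun s _ => hinv s) (fun s _ => hinv s)
    fun s hs => by rw [hf s hs, neg_neg]

end CharTwo

section FiniteField

variable [Field K] [Fintype K] [CharP K 2] {k m : ℕ}

theorem add_mem_frobFixed {x y : K} (hx : x ∈ frobFixed K k) (hy : y ∈ frobFixed K k) :
    x + y ∈ frobFixed K k := by
  rw [mem_frobFixed] at *
  rw [add_pow_char_pow, hx, hy]

theorem trp_mem_frobFixed (hcard : Fintype.card K = 2 ^ (k * m)) (x : K) :
    trp (2 ^ k) m x ∈ frobFixed K k := by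
  have h := trp_pow_expChar_pow_sub (r := 2) k m x
  rwa [← pow_mul, pow_eq_self_of_card_eq hcard, sub_self, sub_eq_zero, ← mem_frobFixed] at h

theorem trp_pow_two_pow_add_self (hcard : Fintype.card K = 2 ^ (k * m)) (y : K) :
    trp (2 ^ k) m (y ^ 2 ^ k + y) = 0 := by
  rw [trp_add, trp_pow_expChar_pow, mem_frobFixed.mp (trp_mem_frobFixed hcard y),
    CharTwo.add_self_eq_zero]

/-- The fibres over `ker Tr_{q/p}` cover `K`, have at most `p` points each, and there are at most
`q / p` of them, so each has exactly `p` points. -/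
theorem card_filter_pow_two_pow_add_eq (hcard : Fintype.card K = 2 ^ (k * m)) (hk : 1 ≤ k)
    (hm : 1 ≤ m) (t : K) :
    #{y : K | y ^ 2 ^ k + y = t} = if trp (2 ^ k) m t = 0 then 2 ^ k else 0 := by
  split_ifs with ht
  · set Z : Finset K := {t : K | trp (2 ^ k) m t = 0}
    have hZ : #Z ≤ (2 ^ k) ^ (m - 1) :=
      card_le_of_forall_trp_eq_zero (Nat.le_self_pow (by omega) 2) hm fun t ht =>
        (mem_filter.mp ht).2
    have hsum : ∑ t ∈ Z, #{y : K | y ^ 2 ^ k + y = t} = ∑ t ∈ Z, 2 ^ k := by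
      refine le_antisymm (sum_le_sum fun t _ => card_filter_pow_two_pow_add_eq_le hk t) ?_
      calc ∑ t ∈ Z, 2 ^ k = #Z * 2 ^ k := by rw [sum_const, smul_eq_mul]
        _ ≤ (2 ^ k) ^ (m - 1) * 2 ^ k := Nat.mul_le_mul_right _ hZ
        _ = Fintype.card K := by rw [← pow_succ, Nat.sub_add_cancel hm, ← pow_mul, hcard]
        _ = ∑ t ∈ Z, #{y : K | y ^ 2 ^ k + y = t} :=
          card_eq_sum_card_fiberwise fun y _ => by simpa [Z] using trp_pow_two_pow_add_self hcard y
    exact (sum_eq_sum_iff_of_le fun t _ => card_filter_pow_two_pow_add_eq_le hk t).mp hsum t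
      (mem_filter.mpr ⟨mem_univ t, ht⟩)
  · refine card_eq_zero.mpr (filter_eq_empty_iff.mpr fun y _ hy => ht ?_)
    rw [← hy, trp_pow_two_pow_add_self hcard]

theorem card_frobFixed (hcard : Fintype.card K = 2 ^ (k * m)) (hk : 1 ≤ k) (hm : 1 ≤ m) :
    #(frobFixed K k) = 2 ^ k := by
  have h := card_filter_pow_two_pow_add_eq hcard hk hm 0
  simp only [CharTwo.add_eq_zero] at h
  rw [if_pos (by simp [trp])] at h
  exact h

theorem sum_psiq_mul {n : ℕ} (hcard : Fintype.card K = 2 ^ n) (hn : 1 ≤ n) (z : K) :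
    ∑ y, psiq n (y * z) = if z = 0 then 2 ^ n else 0 := by
  split_ifs with hz
  · simp [hz, psiq_zero, hcard]
  obtain ⟨x₀, -, hx₀⟩ := exists_tr2_ne_zero hn (S := (univ : Finset K))
    (by rw [card_univ, hcard]; exact Nat.pow_lt_pow_right (by norm_num) (by omega))
  refine sum_eq_zero_of_add_eq_neg (x₀ / z) (fun _ _ => mem_univ _) fun y _ => ?_
  rw [add_mul, div_mul_cancel₀ x₀ hz, psiq_add (pow_eq_self_of_card_eq hcard _)
    (pow_eq_self_of_card_eq hcard _), psiq_of_tr2_ne_zero hx₀, mul_neg_one]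

theorem exists_tr2_mul_ne_zero (hcard : Fintype.card K = 2 ^ (k * m)) (hk : 1 ≤ k) (hm : 1 ≤ m)
    {t : K} (ht : trp (2 ^ k) m t ≠ 0) : ∃ v ∈ frobFixed K k, tr2 (k * m) (v * t) ≠ 0 := by
  obtain ⟨w, hw, hw₀⟩ := exists_tr2_ne_zero hk (S := frobFixed K k)
    (by rw [card_frobFixed hcard hk hm]; exact Nat.pow_lt_pow_right (by norm_num) (by omega))
  have hv : w / trp (2 ^ k) m t ∈ frobFixed K k := by
    rw [mem_frobFixed, div_pow, mem_frobFixed.mp hw, mem_frobFixed.mp (trp_mem_frobFixed hcard t)]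
  refine ⟨_, hv, ?_⟩
  rwa [tr2_mul_eq_tr2_trp, trp_mul_of_pow_eq m (mem_frobFixed.mp hv), div_mul_cancel₀ w ht]

theorem sum_frobFixed_psiq_mul (hcard : Fintype.card K = 2 ^ (k * m)) (hk : 1 ≤ k) (hm : 1 ≤ m)
    (t : K) : ∑ l ∈ frobFixed K k, psiq (k * m) (l * t) =
      if trp (2 ^ k) m t = 0 then 2 ^ k else 0 := by
  split_ifs with ht
  · have hone : ∀ l ∈ frobFixed K k, psiq (k * m) (l * t) = 1 := fun l hl =>
      psiq_of_tr2_eq_zero <| by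
        rw [tr2_mul_eq_tr2_trp, trp_mul_of_pow_eq m (mem_frobFixed.mp hl), ht, mul_zero]
        simp [tr2]
    rw [sum_congr rfl hone, sum_const, card_frobFixed hcard hk hm]
    simp
  obtain ⟨v, hv, hv₀⟩ := exists_tr2_mul_ne_zero hcard hk hm ht
  refine sum_eq_zero_of_add_eq_neg v (fun l hl => add_mem_frobFixed hl hv) fun l _ => ?_
  rw [add_mul, psiq_add (pow_eq_self_of_card_eq hcard _) (pow_eq_self_of_card_eq hcard _),
    psiq_of_tr2_ne_zero hv₀, mul_neg_one]

theorem Ncount_eq_sum_card (R : K → K) :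
    Ncount K (2 ^ k) R = ∑ x, #{y : K | y ^ 2 ^ k + y = x * R x} := by
  rw [Ncount, Nat.card_congr (Equiv.subtypeProdEquivSigmaSubtype
    fun x y : K => y ^ 2 ^ k - y = x * R x), Nat.card_eq_fintype_card, Fintype.card_sigma]
  simp only [Fintype.card_subtype, CharTwo.sub_eq_add]

theorem Ncount_eq_add_mul_weilSum (hcard : Fintype.card K = 2 ^ (k * m)) (hk : 1 ≤ k)
    (hm : 1 ≤ m) (R : K → K) (hR : ∀ μ ∈ frobFixed K k, ∀ x, R (μ * x) = μ * R x) :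
    (Ncount K (2 ^ k) R : ℂ) =
      2 ^ (k * m) + (2 ^ k - 1) * weilSum (k * m) (fun x => x * R x) := by
  have hsum : (Ncount K (2 ^ k) R : ℂ) =
      ∑ l ∈ frobFixed K k, ∑ x, psiq (k * m) (l * (x * R x)) := by
    rw [Ncount_eq_sum_card, sum_comm]
    push_cast
    refine sum_congr rfl fun x _ => ?_
    rw [card_filter_pow_two_pow_add_eq hcard hk hm, sum_frobFixed_psiq_mul hcard hk hm]
    split_ifs <;> simp
  have hunit : ∀ l ∈ (frobFixed K k).erase 0,
      ∑ x, psiq (k * m) (l * (x * R x)) = weilSum (k * m) (fun x => x * R x) := by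
    intro l hl
    obtain ⟨hl₀, hl⟩ := mem_erase.mp hl
    obtain ⟨μ, hμ, rfl⟩ := exists_sq_eq_of_mem_frobFixed hk hl
    have hμ₀ : μ ≠ 0 := by rintro rfl; simp at hl₀
    refine Fintype.sum_equiv (Equiv.mulLeft₀ μ hμ₀) _ _ fun x => ?_
    simp only [Equiv.mulLeft₀_apply, hR μ hμ]
    ring_nf
  rw [hsum, ← add_sum_erase _ _ zero_mem_frobFixed, sum_congr rfl hunit, sum_const,
    card_erase_of_mem zero_mem_frobFixed, card_frobFixed hcard hk hm]
  simp [psiq_zero, hcard, Nat.cast_sub Nat.one_le_two_pow]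

theorem tr2_mul_LpolyIcc {n : ℕ} (hcard : Fintype.card K = 2 ^ n) (k e : ℕ) (c : ℕ → K)
    (x y : K) : tr2 n (x * LpolyIcc (2 ^ k) e c y) = tr2 n (adjIcc k e c x * y) := by
  rw [LpolyIcc, adjIcc, mul_sum, sum_mul, tr2_sum, tr2_sum]
  refine sum_congr rfl fun i _ => ?_
  rw [← tr2_pow_two_pow_of_pow_eq (pow_eq_self_of_card_eq hcard (rt K (k * i) (c i * x) * y))
    (k * i), mul_pow, rt_pow, ← pow_mul 2 k i]
  ring_nf

theorem tr2_polarization {n : ℕ} (hcard : Fintype.card K = 2 ^ n) (k e : ℕ) (c : ℕ → K)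
    (a x y : K) :
    tr2 n ((x + y) * (LpolyIcc (2 ^ k) e c (x + y) + a * (x + y))) =
      tr2 n (x * (LpolyIcc (2 ^ k) e c x + a * x)) + tr2 n (y * (LpolyIcc (2 ^ k) e c y + a * y)) +
        tr2 n (x * (LpolyIcc (2 ^ k) e c y + adjIcc k e c y)) := by
  have hsplit : (x + y) * (LpolyIcc (2 ^ k) e c (x + y) + a * (x + y)) =
      x * (LpolyIcc (2 ^ k) e c x + a * x) + y * (LpolyIcc (2 ^ k) e c y + a * y) +
        (x * LpolyIcc (2 ^ k) e c y + y * LpolyIcc (2 ^ k) e c x) := by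
    rw [LpolyIcc_add (r := 2)]
    linear_combination (a * x * y) * CharTwo.two_eq_zero (R := K)
  rw [hsplit, mul_add x (LpolyIcc (2 ^ k) e c y)]
  simp only [tr2_add]
  rw [tr2_mul_LpolyIcc hcard k e c y x, mul_comm (adjIcc k e c y) x]

end FiniteField

section WeilSum

variable [Field K] [Fintype K] [CharP K 2] (Q E : K → K)

theorem psiq_map_add {n : ℕ} (hcard : Fintype.card K = 2 ^ n)
    (hQ : ∀ x y, tr2 n (Q (x + y)) = tr2 n (Q x) + tr2 n (Q y) + tr2 n (x * E y)) (x y : K) :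
    psiq n (Q (x + y)) = psiq n (Q x) * psiq n (Q y) * psiq n (x * E y) := by
  have h := pow_eq_self_of_card_eq hcard
  rw [← psiq_add (h _) (h _), ← psiq_add (h _) (h _), psiq, psiq, hQ, tr2_add, tr2_add]

theorem weilSum_eq_zero {n : ℕ} (hcard : Fintype.card K = 2 ^ n)
    (hQ : ∀ x y, tr2 n (Q (x + y)) = tr2 n (Q x) + tr2 n (Q y) + tr2 n (x * E y)) {v : K}
    (hv : E v = 0) (hQv : tr2 n (Q v) ≠ 0) : weilSum n Q = 0 :=
  sum_eq_zero_of_add_eq_neg v (fun _ _ => mem_univ _) fun x _ => by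
    rw [psiq_map_add Q E hcard hQ, hv, mul_zero, psiq_zero, psiq_of_tr2_ne_zero hQv]
    ring

theorem weilSum_sq {n : ℕ} (hcard : Fintype.card K = 2 ^ n) (hn : 1 ≤ n)
    (hQ : ∀ x y, tr2 n (Q (x + y)) = tr2 n (Q x) + tr2 n (Q y) + tr2 n (x * E y)) :
    weilSum n Q ^ 2 = 2 ^ n * ∑ v ∈ {v : K | E v = 0}, psiq n (Q v) := by
  calc weilSum n Q ^ 2 = ∑ y, ∑ h, psiq n (Q (y + h)) * psiq n (Q y) := by
        rw [weilSum, sq, sum_mul_sum, sum_comm]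
        exact sum_congr rfl fun y _ =>
          (Fintype.sum_equiv (Equiv.addLeft y) _ (fun x => psiq n (Q x) * psiq n (Q y))
            fun _ => rfl).symm
    _ = ∑ h, psiq n (Q h) * ∑ y, psiq n (y * E h) := by
        rw [sum_comm]
        refine sum_congr rfl fun h _ => ?_
        rw [mul_sum]
        refine sum_congr rfl fun y _ => ?_
        rw [psiq_map_add Q E hcard hQ]
        linear_combination (psiq n (Q h) * psiq n (y * E h)) * psiq_mul_self n (Q y)
    _ = 2 ^ n * ∑ v ∈ {v : K | E v = 0}, psiq n (Q v) := by
        simp_rw [sum_psiq_mul hcard hn, mul_ite, mul_zero, sum_ite, sum_const_zero, add_zero,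
          mul_sum, mul_comm]

end WeilSum

section WeilSumSmallField

variable [Field K] [Fintype K] [CharP K 2] {k m : ℕ} (R E : K → K)

theorem weilSum_eq_zero_of_trp_ne_zero (hcard : Fintype.card K = 2 ^ (k * m)) (hk : 1 ≤ k)
    (hm : 1 ≤ m)
    (hRE : ∀ x y, tr2 (k * m) ((x + y) * R (x + y)) =
      tr2 (k * m) (x * R x) + tr2 (k * m) (y * R y) + tr2 (k * m) (x * E y))
    (hR : ∀ μ ∈ frobFixed K k, ∀ x, R (μ * x) = μ * R x)
    (hE : ∀ μ ∈ frobFixed K k, ∀ x, E (μ * x) = μ * E x) {u : K} (hu : E u = 0)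
    (htu : trp (2 ^ k) m (u * R u) ≠ 0) : weilSum (k * m) (fun x => x * R x) = 0 := by
  obtain ⟨l, hl, hl₀⟩ := exists_tr2_mul_ne_zero hcard hk hm htu
  obtain ⟨μ, hμ, rfl⟩ := exists_sq_eq_of_mem_frobFixed hk hl
  refine weilSum_eq_zero _ E hcard hRE (v := μ * u) (by rw [hE μ hμ, hu, mul_zero]) ?_
  rwa [hR μ hμ, show μ * u * (μ * R u) = μ ^ 2 * (u * R u) by ring]

theorem weilSum_sq_of_trp_eq_zero (hcard : Fintype.card K = 2 ^ (k * m)) (hk : 1 ≤ k)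
    (hm : 1 ≤ m)
    (hRE : ∀ x y, tr2 (k * m) ((x + y) * R (x + y)) =
      tr2 (k * m) (x * R x) + tr2 (k * m) (y * R y) + tr2 (k * m) (x * E y))
    (htr : ∀ u, E u = 0 → trp (2 ^ k) m (u * R u) = 0) :
    weilSum (k * m) (fun x => x * R x) ^ 2 = 2 ^ (k * m) * #{u : K | E u = 0} := by
  have hone : ∀ u ∈ ({u : K | E u = 0} : Finset K), psiq (k * m) (u * R u) = 1 := fun u hu =>
    psiq_of_tr2_eq_zero (by rw [tr2_mul_eq_tr2_trp, htr u (mem_filter.mp hu).2]; simp [tr2])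
  rw [weilSum_sq _ E hcard (Nat.mul_pos hk hm) hRE, sum_congr rfl hone, sum_const, nsmul_one]

end WeilSumSmallField

theorem statement3_general {K : Type*} [Field K] [Fintype K] [CharP K 2]
    (k m e : ℕ) (hk : 1 ≤ k) (hm : 1 ≤ m)
    (hcard : Fintype.card K = 2 ^ (k * m))
    (c : ℕ → K)
    (a : K) (d : ℕ)
    (hd : Nat.card {u : K // LpolyIcc (2 ^ k) e c u + adjIcc k e c u = 0} = (2 ^ k) ^ d) :
    ((∃ u : K, LpolyIcc (2 ^ k) e c u + adjIcc k e c u = 0 ∧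
        trp (2 ^ k) m (u * (LpolyIcc (2 ^ k) e c u + a * u)) ≠ 0) →
      (Ncount K (2 ^ k) (fun x => LpolyIcc (2 ^ k) e c x + a * x) : ℤ) = 2 ^ (k * m)) ∧
    ((∀ u : K, LpolyIcc (2 ^ k) e c u + adjIcc k e c u = 0 →
        trp (2 ^ k) m (u * (LpolyIcc (2 ^ k) e c u + a * u)) = 0) →
      ((Ncount K (2 ^ k) (fun x => LpolyIcc (2 ^ k) e c x + a * x) : ℤ) - 2 ^ (k * m)) ^ 2
        = (2 ^ k - 1) ^ 2 * 2 ^ (k * m) * (2 ^ k) ^ d) := by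
  set R : K → K := fun x => LpolyIcc (2 ^ k) e c x + a * x
  have hR : ∀ μ ∈ frobFixed K k, ∀ x, R (μ * x) = μ * R x := fun μ hμ x => by
    simp only [R, LpolyIcc_mul_of_pow_eq e c (mem_frobFixed.mp hμ)]
    ring
  set E : K → K := fun x => LpolyIcc (2 ^ k) e c x + adjIcc k e c x
  have hE : ∀ μ ∈ frobFixed K k, ∀ x, E (μ * x) = μ * E x := fun μ hμ x => by
    simp only [E, LpolyIcc_mul_of_pow_eq e c (mem_frobFixed.mp hμ),
      adjIcc_mul_of_pow_eq k e c (mem_frobFixed.mp hμ), mul_add]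
  have hRE := tr2_polarization hcard k e c a
  have hN := Ncount_eq_add_mul_weilSum hcard hk hm _ hR
  refine ⟨fun ⟨u, hu, htu⟩ => ?_, fun htr => ?_⟩
  · rw [weilSum_eq_zero_of_trp_ne_zero R E hcard hk hm hRE hR hE hu htu, mul_zero, add_zero] at hN
    exact_mod_cast hN
  · have hS := weilSum_sq_of_trp_eq_zero R E hcard hk hm hRE htr
    rw [← Fintype.card_subtype, ← Nat.card_eq_fintype_card, hd] at hS
    have hsq : ((Ncount K (2 ^ k) R : ℂ) - 2 ^ (k * m)) ^ 2 =
        (2 ^ k - 1) ^ 2 * 2 ^ (k * m) * (2 ^ k) ^ d := by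
      rw [hN]; push_cast at hS; linear_combination (2 ^ k - 1 : ℂ) ^ 2 * hS
    exact_mod_cast hsq

/-- Point counts of the twists `y^p - y = x R_a(x)`. -/
theorem statement3 {K : Type*} [Field K] [Fintype K] [CharP K 2]
    (k m e : ℕ) (hk : 1 ≤ k) (hm : 1 ≤ m) (he : 1 ≤ e)
    (hcard : Fintype.card K = 2 ^ (k * m))
    (c : ℕ → K) (hce : c e ≠ 0)
    (a : K) (d : ℕ)
    (hd : Nat.card {u : K // LpolyIcc (2 ^ k) e c u + adjIcc k e c u = 0} = (2 ^ k) ^ d) :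
    ((∃ u : K, LpolyIcc (2 ^ k) e c u + adjIcc k e c u = 0 ∧
        trp (2 ^ k) m (u * (LpolyIcc (2 ^ k) e c u + a * u)) ≠ 0) →
      (Ncount K (2 ^ k) (fun x => LpolyIcc (2 ^ k) e c x + a * x) : ℤ) = 2 ^ (k * m)) ∧
    ((∀ u : K, LpolyIcc (2 ^ k) e c u + adjIcc k e c u = 0 →
        trp (2 ^ k) m (u * (LpolyIcc (2 ^ k) e c u + a * u)) = 0) →
      ((Ncount K (2 ^ k) (fun x => LpolyIcc (2 ^ k) e c x + a * x) : ℤ) - 2 ^ (k * m)) ^ 2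
        = (2 ^ k - 1) ^ 2 * 2 ^ (k * m) * (2 ^ k) ^ d) :=
  statement3_general k m e hk hm hcard c a d hd
end
end

section
/- Let r = 2^s be a power of 2 and let t_0 be an element of an algebraic closure 𝔽 of F_2 satisfying t_0^r + t_0 = 1. Then: (1) t_0 ∈ F_{r²}; (2) t_0^{r+1} ∈ F_r; (3) Tr_{F_r/F_2}(t_0^{r+1}) = 1; (4) in W_2(F_2), the Witt-vector trace satisfies Tr_{r²/2}(t_0, 0) = s·(1,0) + (0,1). -/
open Finset

open scoped Classical

noncomputable section

variable {K : Type*}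

/-- Constructor for length-two Witt vectors. -/
def W2.mk' {R : Type*} (a b : R) : W2 R := ((a, b) : R × R)

/-! In characteristic two `x ↦ x ^ 2 ^ s` is a ring endomorphism sending `t₀` to `t₀ + 1`, so it
is an involution on `t₀` and fixes `t₀ ^ (r + 1) = t₀ ^ 2 + t₀`, whose absolute trace telescopes to
`t₀ ^ r + t₀ = 1`. For the Witt-vector trace, split the `2s` Frobenius powers into two halves:
`Tr_{2s}(t₀, 0) = Tr_s((t₀, 0) + (t₀ + 1, 0)) = Tr_s((1, 0) + (0, t₀ ^ (r + 1)))`; the trace is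
`s • (1, 0)` on the Frobenius-fixed `(1, 0)`, and on Verschiebung vectors `(0, c)` it is the trace
of `c`. -/

namespace W2

variable {R : Type*} [CommRing R]

theorem mk'_add_mk' (a b c d : R) : mk' a b + mk' c d = mk' (a + c) (b + d + a * c) := rfl

theorem frob_mk' (a b : R) : frob (mk' a b) = mk' (a ^ 2) (b ^ 2) := rfl

theorem frob_iterate_mk' (n : ℕ) (a b : R) :
    frob^[n] (mk' a b) = mk' (a ^ 2 ^ n) (b ^ 2 ^ n) := by
  induction n with
  | zero => simp only [Function.iterate_zero_apply, pow_zero, pow_one]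
  | succ n ih => rw [Function.iterate_succ_apply', ih, frob_mk', ← pow_mul, ← pow_mul, ← pow_succ]

variable [CharP R 2]

theorem frob_add (x y : W2 R) : frob (x + y) = frob x + frob y :=
  Prod.ext (CharTwo.add_sq _ _) <| by
    change (x.2 + y.2 + x.1 * y.1) ^ 2 = x.2 ^ 2 + y.2 ^ 2 + x.1 ^ 2 * y.1 ^ 2
    rw [CharTwo.add_sq, CharTwo.add_sq, mul_pow]

def frobAddHom : W2 R →+ W2 R where
  toFun := frob
  map_zero' := Prod.ext (zero_pow two_ne_zero) (zero_pow two_ne_zero)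
  map_add' := frob_add

def verschiebung : R →+ W2 R where
  toFun := mk' 0
  map_zero' := rfl
  map_add' a b := by rw [mk'_add_mk', add_zero, zero_mul, add_zero]

theorem tr_add (n : ℕ) (x y : W2 R) : tr n (x + y) = tr n x + tr n y := by
  simp only [tr, ← Finset.sum_add_distrib]
  exact Finset.sum_congr rfl fun i _ => iterate_map_add frobAddHom i x y

theorem tr_add_length (m n : ℕ) (x : W2 R) : tr (m + n) x = tr m x + tr n (frob^[m] x) := by
  unfold tr
  rw [Finset.sum_range_add]
  congr 1
  exact Finset.sum_congr rfl fun i _ => by rw [add_comm, Function.iterate_add_apply]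

theorem tr_eq_nsmul_of_frob_eq {x : W2 R} (hx : frob x = x) (n : ℕ) : tr n x = n • x := by
  simp only [tr, Function.iterate_fixed hx, Finset.sum_const, Finset.card_range]

theorem tr_mk'_zero_left (n : ℕ) (c : R) :
    tr n (mk' 0 c) = mk' 0 (∑ i ∈ Finset.range n, c ^ 2 ^ i) := by
  simp only [tr, frob_iterate_mk', zero_pow (pow_ne_zero _ two_ne_zero)]
  exact (map_sum (verschiebung (R := R)) _ _).symm

end W2

section ArtinSchreier

variable {R : Type*} [CommRing R] [CharP R 2] {s : ℕ} {t : R}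

theorem pow_two_pow_sq_eq_self (ht : t ^ 2 ^ s + t = 1) : t ^ (2 ^ s) ^ 2 = t := by
  have ht' := CharTwo.add_eq_iff_eq_add.mp ht
  rw [sq, pow_mul, ht', add_pow_char_pow, one_pow, ht', ← add_assoc, CharTwo.add_self_eq_zero,
    zero_add]

theorem pow_two_pow_add_one_eq (ht : t ^ 2 ^ s + t = 1) : t ^ (2 ^ s + 1) = t ^ 2 + t := by
  rw [pow_succ, CharTwo.add_eq_iff_eq_add.mp ht]
  ring

theorem pow_two_pow_add_one_pow_two_pow (ht : t ^ 2 ^ s + t = 1) :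
    (t ^ (2 ^ s + 1)) ^ 2 ^ s = t ^ (2 ^ s + 1) := by
  rw [pow_two_pow_add_one_eq ht, add_pow_char_pow, ← pow_mul, mul_comm, pow_mul,
    CharTwo.add_eq_iff_eq_add.mp ht, CharTwo.add_sq, one_pow, add_add_add_comm,
    CharTwo.add_self_eq_zero, zero_add]

end ArtinSchreier

theorem tr2_sq_add_self {K : Type*} [Field K] [CharP K 2] (n : ℕ) (x : K) :
    tr2 n (x ^ 2 + x) = x ^ 2 ^ n + x := by
  have hterm : ∀ i, (x ^ 2 + x) ^ 2 ^ i = x ^ 2 ^ (i + 1) - x ^ 2 ^ i := fun i => by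
    rw [add_pow_char_pow, ← pow_mul, ← pow_succ', CharTwo.sub_eq_add]
  rw [tr2, Finset.sum_congr rfl fun i _ => hterm i, Finset.sum_range_sub (fun i => x ^ 2 ^ i),
    pow_zero, pow_one, CharTwo.sub_eq_add]

theorem statement13_general (s : ℕ)
    (t0 : AlgebraicClosure (ZMod 2)) (ht0 : t0 ^ 2 ^ s + t0 = 1) :
    t0 ^ (2 ^ s) ^ 2 = t0 ∧
    (t0 ^ (2 ^ s + 1)) ^ 2 ^ s = t0 ^ (2 ^ s + 1) ∧
    tr2 s (t0 ^ (2 ^ s + 1)) = 1 ∧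
    W2.tr (2 * s) (W2.mk' t0 0)
      = s • W2.mk' (1 : AlgebraicClosure (ZMod 2)) 0
        + W2.mk' (0 : AlgebraicClosure (ZMod 2)) 1 := by
  have htrace : tr2 s (t0 ^ (2 ^ s + 1)) = 1 := by
    rw [pow_two_pow_add_one_eq ht0, tr2_sq_add_self, ht0]
  refine ⟨pow_two_pow_sq_eq_self ht0, pow_two_pow_add_one_pow_two_pow ht0, htrace, ?_⟩
  calc W2.tr (2 * s) (W2.mk' t0 0)
      = W2.tr s (W2.mk' t0 0 + W2.frob^[s] (W2.mk' t0 0)) := by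
        rw [two_mul, W2.tr_add_length, W2.tr_add]
    _ = W2.tr s (W2.mk' 1 0 + W2.mk' 0 (t0 ^ (2 ^ s + 1))) := by
        rw [W2.frob_iterate_mk', W2.mk'_add_mk', W2.mk'_add_mk', add_comm t0, ht0, pow_succ']
        congr 2 <;> simp
    _ = s • W2.mk' 1 0 + W2.mk' 0 1 := by
        rw [W2.tr_add, W2.tr_mk'_zero_left, ← tr2, htrace, W2.tr_eq_nsmul_of_frob_eq
          (by rw [W2.frob_mk', one_pow, zero_pow two_ne_zero])]

/-- Properties of `t₀` with `t₀^r + t₀ = 1` (`r = 2^s`):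
`t₀ ∈ 𝔽_{r²}`, `t₀^{r+1} ∈ 𝔽_r`, `Tr_{𝔽_r/𝔽_2}(t₀^{r+1}) = 1`, and the Witt-vector trace
`Tr_{r²/2}(t₀, 0) = s·(1,0) + (0,1)`. -/
theorem statement13 (s : ℕ) (hs : 1 ≤ s)
    (t0 : AlgebraicClosure (ZMod 2)) (ht0 : t0 ^ 2 ^ s + t0 = 1) :
    t0 ^ (2 ^ s) ^ 2 = t0 ∧
    (t0 ^ (2 ^ s + 1)) ^ 2 ^ s = t0 ^ (2 ^ s + 1) ∧
    tr2 s (t0 ^ (2 ^ s + 1)) = 1 ∧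
    W2.tr (2 * s) (W2.mk' t0 0)
      = s • W2.mk' (1 : AlgebraicClosure (ZMod 2)) 0
        + W2.mk' (0 : AlgebraicClosure (ZMod 2)) 1 :=
  statement13_general s t0 ht0

end
end

section
/- Let p be a power of 2 and m ≥ 1 an integer. For each k ≥ 1 let N_k := |{(x,y) ∈ F_{p^k} × F_{p^k} : y^p + y = x^{p^m + 1}}|. Then N_{2m} = p^{2m} + (p−1)·p^{2m} (i.e. the curve y^p + y = x^{p^m+1} is F_{p^{2m}}-maximal), and for every k with 1 ≤ k < 2m one has (N_k − p^k)² ≠ (p−1)²·p^{2m}·p^k (i.e. the curve is not F_{p^k}-extremal); hence the F_p-period of this curve is 2m and its parity is −1. -/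
open Finset

open scoped Classical

noncomputable section

variable {K : Type*}

/-! Over a field `F` with `q ^ n` elements, `q = p ^ k`, the Artin–Schreier map `y ↦ y ^ q - y`
is additive, its kernel has at most `q` elements and its image lies in the zero set of
`trp q n`, which has at most `q ^ (n - 1)` elements. Since `|ker| · |im| = q ^ n`, both bounds
are equalities (additive Hilbert 90), so every `c` with `trp q n c = 0` has exactly `q` preimages.
For `n = 2m` the value `c = x ^ (q ^ m + 1)` is fixed by `z ↦ z ^ q ^ m`, so
`trp q (2m) c = 2 · trp q m c = 0` in characteristic two, and every fibre of the curve over `x`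
has `q` points. For `t < 2m` the trivial bound `N ≤ q ^ t · q` already gives
`(N - q ^ t) ^ 2 ≤ (q - 1) ^ 2 q ^ (2t) < (q - 1) ^ 2 q ^ (2m) q ^ t`. -/

open Polynomial

lemma natCard_addSubgroup_eq_card_filter {G : Type*} [AddGroup G] [Fintype G] (H : AddSubgroup G)
    [DecidablePred (· ∈ H)] : Nat.card H = #{x | x ∈ H} := by
  rw [Nat.card_eq_fintype_card]
  convert Fintype.card_subtype (· ∈ H)

lemma natCard_subtype_prod_eq_sum {α β : Type*} [Fintype α] [Fintype β] (P : α → β → Prop) :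
    Nat.card {z : α × β // P z.1 z.2} = ∑ a, #{b | P a b} := by
  rw [Nat.card_congr (Equiv.subtypeProdEquivSigmaSubtype P), Nat.card_sigma]
  refine sum_congr rfl fun a _ => ?_
  rw [Nat.card_eq_fintype_card]
  convert Fintype.card_subtype (P a)

section RootCounting

lemma card_filter_isRoot_le {R : Type*} [CommRing R] [IsDomain R] [Fintype R] {P : R[X]}
    (hP : P ≠ 0) : #{x | P.IsRoot x} ≤ P.natDegree :=
  card_le_degree_of_subset_roots fun x hx => by simpa [mem_roots hP] using hx

lemma natDegree_sum_X_pow_pow {R : Type*} [Semiring R] [Nontrivial R] {q : ℕ} (hq : 1 < q)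
    (n : ℕ) : (∑ i ∈ range (n + 1), (X : R[X]) ^ q ^ i).natDegree = q ^ n := by
  induction n with
  | zero => simp
  | succ n ih =>
    rw [sum_range_succ, natDegree_add_eq_right_of_natDegree_lt] <;> rw [natDegree_X_pow]
    rw [ih]
    exact Nat.pow_lt_pow_right hq n.lt_succ_self

variable {F : Type*} [Field F] [Fintype F]

lemma card_filter_pow_sub_self_eq_le {q : ℕ} (hq : 1 < q) (c : F) :
    #{y : F | y ^ q - y = c} ≤ q := by
  have hdeg : (X ^ q - X - C c : F[X]).natDegree = q := by
    rw [natDegree_sub_C, FiniteField.X_pow_card_sub_X_natDegree_eq F hq]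
  have hne : (X ^ q - X - C c : F[X]) ≠ 0 := ne_zero_of_natDegree_gt (hdeg ▸ hq)
  calc #{y : F | y ^ q - y = c} = #{y | (X ^ q - X - C c).IsRoot y} := by simp [sub_eq_zero]
    _ ≤ q := (card_filter_isRoot_le hne).trans hdeg.le

lemma card_filter_trp_eq_zero_le {q n : ℕ} (hq : 1 < q) (hn : n ≠ 0) :
    #{z : F | trp q n z = 0} ≤ q ^ (n - 1) := by
  obtain ⟨n, rfl⟩ := Nat.exists_eq_succ_of_ne_zero hn
  set P : F[X] := ∑ i ∈ range (n + 1), X ^ q ^ i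
  have hdeg : P.natDegree = q ^ n := natDegree_sum_X_pow_pow hq n
  have hne : P ≠ 0 := ne_zero_of_natDegree_gt (hdeg ▸ Nat.one_le_pow n q (by omega))
  calc #{z : F | trp q (n + 1) z = 0} = #{z | P.IsRoot z} := by
        congr 1; ext z
        simp only [Finset.mem_filter, Finset.mem_univ, true_and]
        simp [P, trp, IsRoot, eval_finsetSum]
    _ ≤ q ^ (n + 1 - 1) := (card_filter_isRoot_le hne).trans hdeg.le

end RootCounting

section ArtinSchreier

variable (F : Type*) [Field F] (p k : ℕ) [ExpChar F p]

def artinSchreier : F →+ F :=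
  (iterateFrobenius F p k).toAddMonoidHom - AddMonoidHom.id F

variable {F p k}

@[simp]
lemma artinSchreier_apply (y : F) : artinSchreier F p k y = y ^ p ^ k - y := rfl

lemma trp_pow_sub_self {n : ℕ} (hF : ∀ z : F, z ^ (p ^ k) ^ n = z) (y : F) :
    trp (p ^ k) n (y ^ p ^ k - y) = 0 := by
  have htelescope :
      ∀ i, (y ^ p ^ k - y) ^ (p ^ k) ^ i = y ^ (p ^ k) ^ (i + 1) - y ^ (p ^ k) ^ i := by
    intro i
    rw [← pow_mul, sub_pow_expChar_pow, pow_mul, ← pow_mul, ← pow_succ']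
  simp only [trp, htelescope, sum_range_sub (fun i => y ^ (p ^ k) ^ i), hF, pow_zero, pow_one,
    sub_self]

variable [Fintype F] {n : ℕ}

lemma trp_eq_zero_of_mem_range_artinSchreier (hF : Fintype.card F = (p ^ k) ^ n) {c : F}
    (hc : c ∈ (artinSchreier F p k).range) : trp (p ^ k) n c = 0 := by
  obtain ⟨y, rfl⟩ := hc
  exact trp_pow_sub_self (fun z => hF ▸ FiniteField.pow_card z) y

lemma natCard_ker_artinSchreier_mul_natCard_range :
    Nat.card (artinSchreier F p k).ker * Nat.card (artinSchreier F p k).range = Fintype.card F := by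
  rw [← AddSubgroup.index_ker, AddSubgroup.card_mul_index, Nat.card_eq_fintype_card]

lemma natCard_ker_artinSchreier_le (hq : 1 < p ^ k) :
    Nat.card (artinSchreier F p k).ker ≤ p ^ k := by
  rw [natCard_addSubgroup_eq_card_filter]
  simpa using card_filter_pow_sub_self_eq_le (F := F) hq 0

lemma natCard_range_artinSchreier_le (hq : 1 < p ^ k) (hn : n ≠ 0)
    (hF : Fintype.card F = (p ^ k) ^ n) :
    Nat.card (artinSchreier F p k).range ≤ (p ^ k) ^ (n - 1) := by
  rw [natCard_addSubgroup_eq_card_filter]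
  refine (card_le_card fun c hc => ?_).trans (card_filter_trp_eq_zero_le hq hn)
  simpa using trp_eq_zero_of_mem_range_artinSchreier hF (mem_filter.1 hc).2

lemma natCard_ker_artinSchreier_and_natCard_range (hq : 1 < p ^ k) (hn : n ≠ 0)
    (hF : Fintype.card F = (p ^ k) ^ n) :
    Nat.card (artinSchreier F p k).ker = p ^ k ∧
      Nat.card (artinSchreier F p k).range = (p ^ k) ^ (n - 1) := by
  refine (mul_eq_mul_iff_eq_and_eq_of_pos' (natCard_ker_artinSchreier_le hq)
    (natCard_range_artinSchreier_le hq hn hF) (by omega) Nat.card_pos).1 ?_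
  rw [natCard_ker_artinSchreier_mul_natCard_range, hF, ← pow_succ', Nat.sub_one_add_one hn]

lemma mem_range_artinSchreier_of_trp_eq_zero (hq : 1 < p ^ k) (hn : n ≠ 0)
    (hF : Fintype.card F = (p ^ k) ^ n) {c : F} (hc : trp (p ^ k) n c = 0) :
    c ∈ (artinSchreier F p k).range := by
  have hsub : ({c | c ∈ (artinSchreier F p k).range} : Finset F) ⊆
      ({c | trp (p ^ k) n c = 0} : Finset F) :=
    fun c hc => by simpa using trp_eq_zero_of_mem_range_artinSchreier hF (mem_filter.1 hc).2
  have heq := eq_of_subset_of_card_le hsub <| by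
    rw [← natCard_addSubgroup_eq_card_filter,
      (natCard_ker_artinSchreier_and_natCard_range hq hn hF).2]
    exact card_filter_trp_eq_zero_le hq hn
  have hmem : c ∈ ({c | trp (p ^ k) n c = 0} : Finset F) := by simpa using hc
  rw [← heq] at hmem
  simpa using hmem

lemma card_filter_pow_sub_self_eq_of_trp_eq_zero (hq : 1 < p ^ k) (hn : n ≠ 0)
    (hF : Fintype.card F = (p ^ k) ^ n) {c : F} (hc : trp (p ^ k) n c = 0) :
    #{y : F | y ^ p ^ k - y = c} = p ^ k :=
  calc #{y : F | y ^ p ^ k - y = c} = #{y | artinSchreier F p k y = c} := rfl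
    _ = #{y | artinSchreier F p k y = 0} := AddMonoidHom.card_fiber_eq_of_mem_range _
        (mem_range_artinSchreier_of_trp_eq_zero hq hn hF hc) ⟨0, map_zero _⟩
    _ = Nat.card (artinSchreier F p k).ker := by
        rw [natCard_addSubgroup_eq_card_filter]; congr 1; ext
        simp only [Finset.mem_filter, Finset.mem_univ, true_and]; simp
    _ = p ^ k := (natCard_ker_artinSchreier_and_natCard_range hq hn hF).1

end ArtinSchreier

lemma trp_two_mul_eq_two_mul {F : Type*} [Field F] {q m : ℕ} {c : F} (hc : c ^ q ^ m = c) :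
    trp q (2 * m) c = 2 * trp q m c := by
  have hshift : ∀ i, c ^ q ^ (m + i) = c ^ q ^ i := fun i => by rw [pow_add, pow_mul, hc]
  simp only [trp, two_mul, sum_range_add, hshift]

lemma pow_pow_add_one_pow_pow_eq_self {M : Type*} [Monoid M] {q m : ℕ} {x : M}
    (hx : x ^ q ^ (2 * m) = x) : (x ^ (q ^ m + 1)) ^ q ^ m = x ^ (q ^ m + 1) := by
  rw [← pow_mul, add_one_mul, ← pow_add, ← two_mul, pow_add, hx, pow_succ']

section Curve

variable {F : Type*} [Field F] [Finite F] [CharP F 2] {k : ℕ}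

lemma natCard_curve_le (hk : 1 ≤ k) (f : F → F) :
    Nat.card {z : F × F // z.2 ^ 2 ^ k + z.2 = f z.1} ≤ Nat.card F * 2 ^ k := by
  have := Fintype.ofFinite F
  rw [natCard_subtype_prod_eq_sum fun (x y : F) => y ^ 2 ^ k + y = f x, Nat.card_eq_fintype_card,
    ← smul_eq_mul, ← card_univ, ← sum_const]
  refine sum_le_sum fun x _ => ?_
  simpa [CharTwo.sub_eq_add] using
    card_filter_pow_sub_self_eq_le (F := F) (Nat.one_lt_two_pow_iff.2 (by omega)) (f x)

lemma natCard_curve_eq {m : ℕ} (hk : 1 ≤ k) (hm : m ≠ 0) (hF : Nat.card F = (2 ^ k) ^ (2 * m)) :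
    Nat.card {z : F × F // z.2 ^ 2 ^ k + z.2 = z.1 ^ ((2 ^ k) ^ m + 1)} = Nat.card F * 2 ^ k := by
  have := Fintype.ofFinite F
  rw [natCard_subtype_prod_eq_sum fun (x y : F) => y ^ 2 ^ k + y = x ^ ((2 ^ k) ^ m + 1),
    Nat.card_eq_fintype_card, ← smul_eq_mul, ← card_univ, ← sum_const]
  refine sum_congr rfl fun x _ => ?_
  have hF' : Fintype.card F = (2 ^ k) ^ (2 * m) := by rwa [Nat.card_eq_fintype_card] at hF
  have hx : x ^ (2 ^ k) ^ (2 * m) = x := hF' ▸ FiniteField.pow_card x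
  have htr : trp (2 ^ k) (2 * m) (x ^ ((2 ^ k) ^ m + 1)) = 0 := by
    rw [trp_two_mul_eq_two_mul (pow_pow_add_one_pow_pow_eq_self hx), CharTwo.two_eq_zero, zero_mul]
  simpa [CharTwo.sub_eq_add] using
    card_filter_pow_sub_self_eq_of_trp_eq_zero (Nat.one_lt_two_pow_iff.2 (by omega)) (by omega)
      hF' htr

end Curve

lemma sq_sub_lt_of_le_mul {N A Q B : ℤ} (hN : 0 ≤ N) (hNA : N ≤ A * Q) (hQ : 2 ≤ Q) (hA : 0 < A)
    (hAB : A < B) : (N - A) ^ 2 < (Q - 1) ^ 2 * B * A := by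
  have hdev : (N - A) ^ 2 ≤ ((Q - 1) * A) ^ 2 := sq_le_sq' (by nlinarith) (by nlinarith)
  have hgap : ((Q - 1) * A) ^ 2 < (Q - 1) ^ 2 * B * A := by
    rw [mul_pow, sq A, ← mul_assoc]
    exact mul_lt_mul_of_pos_right (mul_lt_mul_of_pos_left hAB (by nlinarith)) hA
  linarith

/-- The curve `y^p + y = x^{p^m+1}` is `𝔽_{p^{2m}}`-maximal and is not
`𝔽_{p^t}`-extremal for `t < 2m`: its `𝔽_p`-period is `2m` and its parity is `-1`. -/
theorem statement15 (k m : ℕ) (hk : 1 ≤ k) (hm : 1 ≤ m) :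
    (Nat.card {z : GaloisField 2 (k * (2 * m)) × GaloisField 2 (k * (2 * m)) //
        z.2 ^ 2 ^ k + z.2 = z.1 ^ ((2 ^ k) ^ m + 1)} : ℤ)
      = 2 ^ (k * (2 * m)) + (2 ^ k - 1) * 2 ^ (k * (2 * m)) ∧
    ∀ t : ℕ, 1 ≤ t → t < 2 * m →
      ((Nat.card {z : GaloisField 2 (k * t) × GaloisField 2 (k * t) //
          z.2 ^ 2 ^ k + z.2 = z.1 ^ ((2 ^ k) ^ m + 1)} : ℤ) - 2 ^ (k * t)) ^ 2
        ≠ (2 ^ k - 1) ^ 2 * (2 ^ k) ^ (2 * m) * 2 ^ (k * t) := by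
  have hcard : ∀ t, 1 ≤ t → Nat.card (GaloisField 2 (k * t)) = (2 ^ k) ^ t := fun t ht => by
    rw [GaloisField.card 2 _ (Nat.mul_pos hk ht).ne', pow_mul]
  refine ⟨?_, fun t ht htm => (sq_sub_lt_of_le_mul (by positivity) ?_ ?_ (by positivity) ?_).ne⟩
  · rw [natCard_curve_eq hk (by omega) (hcard _ (by omega)), hcard _ (by omega), pow_mul]
    push_cast
    ring
  · rw [pow_mul]
    exact_mod_cast hcard t ht ▸ natCard_curve_le (F := GaloisField 2 (k * t)) hk _
  · exact le_self_pow₀ (by norm_num) (by omega)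
  · rw [pow_mul]
    exact pow_lt_pow_right₀ (one_lt_pow₀ one_lt_two (by omega)) htm
end
end

section
/- Let k be a field, X a k-vector space of dimension 2r, ω an alternating bilinear form on X (that is, ω(u,u) = 0 for all u ∈ X), and φ : X → k a linear map. Then there exists a subspace W' ⊆ X with dim_k W' = r such that ω(u,v) = 0 for all u, v ∈ W' and φ vanishes on W'. -/
open Finset

open scoped Classical

noncomputable section

variable {K : Type*}

/-- In a `2r`-dimensional space with an alternating bilinear form `ω`
and a linear functional `φ`, there is an `r`-dimensional totally isotropic subspace on
which `φ` vanishes. -/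
theorem statement17 {k : Type*} [Field k] {X : Type*} [AddCommGroup X] [Module k X]
    [FiniteDimensional k X] (r : ℕ) (hdim : Module.finrank k X = 2 * r)
    (ω : X →ₗ[k] X →ₗ[k] k) (halt : ∀ u : X, ω u u = 0)
    (φ : X →ₗ[k] k) :
    ∃ W' : Submodule k X, Module.finrank k W' = r ∧
      (∀ u ∈ W', ∀ v ∈ W', ω u v = 0) ∧
      ∀ u ∈ W', φ u = 0 := by
  have hAlt : ω.IsAlt := halt
  have hrefl : ω.IsRefl := hAlt.isRefl
  suffices h : ∀ m, m ≤ r → ∃ W' : Submodule k X, Module.finrank k W' = m ∧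
      W' ≤ LinearMap.ker φ ∧ ∀ u ∈ W', ∀ v ∈ W', ω u v = 0 by
    obtain ⟨W', h1, h2, h3⟩ := h r le_rfl
    exact ⟨W', h1, h3, fun u hu => h2 hu⟩
  intro m
  induction m with
  | zero => exact fun _ => ⟨⊥, by simp, bot_le, by simp⟩
  | succ m ih =>
    intro hm
    obtain ⟨W, hWrank, hker, hiso⟩ := ih (le_of_lt (Nat.lt_of_succ_le hm))
    have hWorth : W ≤ LinearMap.BilinForm.orthogonal ω W := fun v hv u hu => hiso u hu v hv
    set Z := LinearMap.BilinForm.orthogonal ω W ⊓ LinearMap.ker φ with hZdef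
    have hWZ : W ≤ Z := le_inf hWorth hker
    -- dimension bounds
    have horthW : Module.finrank k W + Module.finrank k (LinearMap.BilinForm.orthogonal ω W)
        = Module.finrank k X + Module.finrank k (W ⊓ LinearMap.BilinForm.orthogonal ω ⊤ : Submodule k X) :=
      LinearMap.BilinForm.finrank_add_finrank_orthogonal hrefl W
    have hkerφ : Module.finrank k (LinearMap.range φ) + Module.finrank k (LinearMap.ker φ)
        = Module.finrank k X := LinearMap.finrank_range_add_finrank_ker φ
    have hrange : Module.finrank k (LinearMap.range φ) ≤ 1 := by
      simpa using Submodule.finrank_le (LinearMap.range φ)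
    have hsup : Module.finrank k (LinearMap.BilinForm.orthogonal ω W ⊔ LinearMap.ker φ : Submodule k X)
        + Module.finrank k Z
        = Module.finrank k (LinearMap.BilinForm.orthogonal ω W) + Module.finrank k (LinearMap.ker φ) :=
      Submodule.finrank_sup_add_finrank_inf_eq _ _
    have hsuple : Module.finrank k (LinearMap.BilinForm.orthogonal ω W ⊔ LinearMap.ker φ : Submodule k X)
        ≤ Module.finrank k X := Submodule.finrank_le _
    have hZrank : m < Module.finrank k Z := by
      rw [hdim] at horthW hkerφ hsuple
      omega
    have hWne : W ≠ Z := fun h => by rw [h] at hWrank; omega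
    obtain ⟨v, hvZ, hvW⟩ := SetLike.exists_of_lt (lt_of_le_of_ne hWZ hWne)
    have hvorth : v ∈ LinearMap.BilinForm.orthogonal ω W := hvZ.1
    have hvker : φ v = 0 := hvZ.2
    have hvne : v ≠ 0 := fun h => hvW (h ▸ W.zero_mem)
    refine ⟨W ⊔ k ∙ v, ?_, ?_, ?_⟩
    · have hinf : W ⊓ (k ∙ v) = ⊥ := by
        rw [Submodule.eq_bot_iff]
        rintro x ⟨hxW, hxv⟩
        obtain ⟨c, rfl⟩ := Submodule.mem_span_singleton.mp hxv
        rcases eq_or_ne c 0 with rfl | hc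
        · simp
        · exact absurd (by simpa [smul_smul, inv_mul_cancel₀ hc] using W.smul_mem c⁻¹ hxW) hvW
      have := Submodule.finrank_sup_add_finrank_inf_eq W (k ∙ v)
      rw [hinf, finrank_bot, finrank_span_singleton hvne] at this
      omega
    · refine sup_le hker ?_
      rintro x hx
      obtain ⟨c, rfl⟩ := Submodule.mem_span_singleton.mp hx
      simp [LinearMap.mem_ker, hvker]
    · have key : ∀ a ∈ W ⊔ k ∙ v, ∀ b ∈ W ⊔ k ∙ v, ω a b = 0 := by
        intro a ha b hb
        obtain ⟨w1, hw1, x1, hx1, rfl⟩ := Submodule.mem_sup.mp ha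
        obtain ⟨w2, hw2, x2, hx2, rfl⟩ := Submodule.mem_sup.mp hb
        obtain ⟨c1, rfl⟩ := Submodule.mem_span_singleton.mp hx1
        obtain ⟨c2, rfl⟩ := Submodule.mem_span_singleton.mp hx2
        have h1 : ω w1 w2 = 0 := hiso w1 hw1 w2 hw2
        have h2 : ω w1 v = 0 := hvorth w1 hw1
        have h3 : ω v w2 = 0 := hrefl w2 v (hvorth w2 hw2)
        have h4 : ω v v = 0 := halt v
        simp only [map_add, map_smul, LinearMap.add_apply, LinearMap.smul_apply,
          h1, h2, h3, h4, smul_zero, add_zero, zero_add]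
      exact key

end
end

section
/- Let k be a field and X a finite-dimensional k-vector space equipped with a nondegenerate alternating bilinear form ω. Let φ be a k-linear automorphism of X of finite order m satisfying ω(φ(u), φ(v)) = ω(u,v) for all u, v ∈ X, and assume the polynomial x^m − 1 splits into linear factors over k. Then there exists a totally isotropic subspace W' ⊆ X with dim_k W' = (dim_k X)/2 and φ(W') = W'. -/
/-!
A totally isotropic `φ`-stable subspace `W` that is maximal among such subspaces is Lagrangian.
Otherwise `W < W^⊥`; both are `φ`-stable because `φ` preserves `ω`, and since `φ^m = 1` with
`x^m - 1` split, `φ` has an eigenvector on `W^⊥ / W`. Adding a lift `x` of it to `W` gives a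
larger `φ`-stable subspace, still isotropic as `x ⊥ W` and `ω x x = 0`. For `W = W^⊥`,
nondegeneracy gives `dim W = dim X - dim W`.
-/

open Finset

open scoped Classical

noncomputable section

variable {K : Type*}

section SymplecticInvariantLagrangian

open Polynomial

variable {k V : Type*} [Field k] [AddCommGroup V] [Module k V]

namespace LinearMap.BilinForm

variable {B : LinearMap.BilinForm k V} {φ : V ≃ₗ[k] V}

theorem map_orthogonal_le (hφ : ∀ u v, B (φ u) (φ v) = B u v) {W : Submodule k V}
    (hW : W.map (φ : V →ₗ[k] V) = W) :
    (B.orthogonal W).map (φ : V →ₗ[k] V) ≤ B.orthogonal W := by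
  rintro _ ⟨u, hu, rfl⟩ w hw
  rw [← hW] at hw
  obtain ⟨w, hw, rfl⟩ := hw
  simpa [hφ] using hu w hw

theorem sup_span_singleton_le_orthogonal (hB : B.IsAlt) {W : Submodule k V}
    (hW : W ≤ B.orthogonal W) {x : V} (hx : x ∈ B.orthogonal W) :
    W ⊔ k ∙ x ≤ B.orthogonal (W ⊔ k ∙ x) := by
  intro u hu v hv
  obtain ⟨a, ha, _, hc, rfl⟩ := Submodule.mem_sup.mp hu
  obtain ⟨b, hb, _, hd, rfl⟩ := Submodule.mem_sup.mp hv
  obtain ⟨c, rfl⟩ := Submodule.mem_span_singleton.mp hc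
  obtain ⟨d, rfl⟩ := Submodule.mem_span_singleton.mp hd
  have hxa : B x a = 0 := hB.isRefl _ _ (hx a ha)
  simp [hW ha b hb, hx b hb, hxa, hB.self_eq_zero]

end LinearMap.BilinForm

variable [FiniteDimensional k V]

theorem Module.End.exists_hasEigenvalue_of_aeval_eq_zero [Nontrivial V] {f : Module.End k V}
    {p : k[X]} (hp : p ≠ 0) (hsplit : p.Splits) (hf : aeval f p = 0) :
    ∃ μ, f.HasEigenvalue μ := by
  have hint : IsIntegral k f := Algebra.IsIntegral.isIntegral f
  obtain ⟨μ, hμ⟩ := (hsplit.of_dvd hp (minpoly.dvd k f hf)).exists_eval_eq_zero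
    (minpoly.degree_pos hint).ne'
  exact ⟨μ, Module.End.hasEigenvalue_of_isRoot hμ⟩

theorem Module.End.exists_sub_smul_mem_of_lt {f : Module.End k V} {m : ℕ} (hm : 0 < m)
    (hfm : f ^ m = 1) (hsplit : (X ^ m - 1 : k[X]).Splits) {W P : Submodule k V} (hWP : W < P)
    (hW : ∀ x ∈ W, f x ∈ W) (hP : ∀ x ∈ P, f x ∈ P) :
    ∃ x ∈ P, x ∉ W ∧ ∃ μ : k, f x - μ • x ∈ W := by
  set W₀ := W.comap P.subtype
  have hW₀ : W₀ ≤ W₀.comap (f.restrict hP) := fun x hx => hW x hx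
  set ψ := W₀.mapQ W₀ _ hW₀
  have hψm : ψ ^ m = 1 := by
    rw [← Submodule.mapQ_pow]
    ext x
    simp [Module.End.pow_restrict, hfm, LinearMap.restrict_apply]
  have : Nontrivial (P ⧸ W₀) := by
    obtain ⟨y, hyP, hyW⟩ := SetLike.exists_of_lt hWP
    refine Submodule.Quotient.nontrivial_iff.mpr fun htop => hyW ?_
    exact (htop ▸ Submodule.mem_top : (⟨y, hyP⟩ : P) ∈ W₀)
  obtain ⟨μ, hμ⟩ := exists_hasEigenvalue_of_aeval_eq_zero
    (X_pow_sub_C_ne_zero hm 1) (by simpa using hsplit) (f := ψ) (by simp [hψm])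
  obtain ⟨q, hq⟩ := hμ.exists_hasEigenvector
  obtain ⟨x, rfl⟩ := Submodule.mkQ_surjective W₀ q
  refine ⟨x, x.2, fun h => hq.2 ((Submodule.Quotient.mk_eq_zero W₀).mpr h), μ, ?_⟩
  exact (Submodule.Quotient.eq W₀).mp
    (hq.apply_eq_smul.trans (Submodule.Quotient.mk_smul _ _ _).symm)

theorem LinearEquiv.map_eq_of_map_le (φ : V ≃ₗ[k] V) {W : Submodule k V}
    (h : W.map (φ : V →ₗ[k] V) ≤ W) : W.map (φ : V →ₗ[k] V) = W :=
  Submodule.eq_of_le_of_finrank_eq h (φ.finrank_map_eq W)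

namespace LinearMap.BilinForm

variable {B : LinearMap.BilinForm k V} {φ : V ≃ₗ[k] V}

theorem exists_gt_le_orthogonal_map_eq (hB : B.IsAlt) (hφ : ∀ u v, B (φ u) (φ v) = B u v)
    {m : ℕ} (hm : 0 < m) (hφm : (φ : Module.End k V) ^ m = 1)
    (hsplit : (X ^ m - 1 : k[X]).Splits) {W : Submodule k V}
    (hWφ : W.map (φ : V →ₗ[k] V) = W) (hWlt : W < B.orthogonal W) :
    ∃ W' : Submodule k V, W < W' ∧ W' ≤ B.orthogonal W' ∧ W'.map (φ : V →ₗ[k] V) = W' := by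
  obtain ⟨x, hxP, hxW, μ, hφx⟩ := Module.End.exists_sub_smul_mem_of_lt hm hφm hsplit hWlt
    (fun x hx => hWφ ▸ Submodule.mem_map_of_mem hx)
    (fun x hx => map_orthogonal_le hφ hWφ (Submodule.mem_map_of_mem hx))
  refine ⟨W ⊔ k ∙ x, left_lt_sup.mpr ?_, sup_span_singleton_le_orthogonal hB hWlt.le hxP,
    φ.map_eq_of_map_le ?_⟩
  · rwa [Submodule.span_singleton_le_iff_mem]
  · rw [Submodule.map_sup, Submodule.map_span, Set.image_singleton, hWφ]
    refine sup_le le_sup_left ((Submodule.span_singleton_le_iff_mem _ _).mpr ?_)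
    rw [← sub_add_cancel ((φ : Module.End k V) x) (μ • x)]
    exact Submodule.add_mem_sup hφx (Submodule.smul_mem _ _ (Submodule.mem_span_singleton_self _))

theorem exists_orthogonal_eq_map_eq (hB : B.IsAlt) (hφ : ∀ u v, B (φ u) (φ v) = B u v)
    {m : ℕ} (hm : 0 < m) (hφm : (φ : Module.End k V) ^ m = 1)
    (hsplit : (X ^ m - 1 : k[X]).Splits) :
    ∃ W : Submodule k V, B.orthogonal W = W ∧ W.map (φ : V →ₗ[k] V) = W := by
  obtain ⟨W, ⟨hWiso, hWφ⟩, hmax⟩ := wellFounded_gt.has_min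
    {W : Submodule k V | W ≤ B.orthogonal W ∧ W.map (φ : V →ₗ[k] V) = W}
    ⟨⊥, by simp, Submodule.map_bot _⟩
  refine ⟨W, (eq_of_le_of_not_lt hWiso fun hlt => ?_).symm, hWφ⟩
  obtain ⟨W', hlt', hW'⟩ := exists_gt_le_orthogonal_map_eq hB hφ hm hφm hsplit hWφ hlt
  exact hmax W' hW' hlt'

end LinearMap.BilinForm

end SymplecticInvariantLagrangian

/-- A symplectic automorphism of finite order `m`, with `x^m - 1` split,
stabilises some maximal totally isotropic subspace. -/
theorem statement18 {k : Type*} [Field k] {X : Type*} [AddCommGroup X] [Module k X]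
    [FiniteDimensional k X]
    (ω : X →ₗ[k] X →ₗ[k] k) (halt : ∀ u : X, ω u u = 0)
    (hnd : ∀ u : X, (∀ v : X, ω u v = 0) → u = 0)
    (m : ℕ) (hm : 1 ≤ m)
    (φ : X ≃ₗ[k] X) (hord : orderOf φ = m)
    (hω : ∀ u v : X, ω (φ u) (φ v) = ω u v)
    (hsplit : Polynomial.Splits ((Polynomial.X ^ m - 1 : Polynomial k).map (RingHom.id k))) :
    ∃ W' : Submodule k X, Module.finrank k W' = Module.finrank k X / 2 ∧
      (∀ u ∈ W', ∀ v ∈ W', ω u v = 0) ∧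
      Submodule.map (φ : X →ₗ[k] X) W' = W' := by
  have hφm : (φ : Module.End k X) ^ m = 1 := by
    rw [← hord]
    exact (map_pow LinearEquiv.automorphismGroup.toLinearMapMonoidHom φ _).symm.trans
      (by rw [pow_orderOf_eq_one, map_one])
  obtain ⟨W, hW, hWφ⟩ := LinearMap.BilinForm.exists_orthogonal_eq_map_eq (B := ω) halt hω hm hφm
    (by rwa [Polynomial.map_id] at hsplit)
  have hB : LinearMap.BilinForm.Nondegenerate ω :=
    (LinearMap.IsAlt.isRefl halt).nondegenerate_iff_separatingLeft.mpr hnd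
  have hrank := LinearMap.BilinForm.finrank_orthogonal hB W
  rw [hW] at hrank
  refine ⟨W, by omega, fun u hu v hv => ?_, hWφ⟩
  rw [← hW] at hv
  exact hv u hu

end
end
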